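/- Let M be a loopless matroid on a finite ground set E, B a building set for M, N a nested set, and X ∈ N. Then there exists an atom (rank-1 flat) A of M with A ⊆ X and A ⊄ Y for every Y ∈ N with Y ⊊ X. Consequently the label m_N(X) is well defined. -/

import Mathlib

open Set Matroid
open scoped Matroid

variable {α : Type*}

/-- Two sets are incomparable under inclusion. -/
def Incomp (X Y : Set α) : Prop := ¬ X ⊆ Y ∧ ¬ Y ⊆ X

/-- The inclusion-maximal elements of a family of sets. -/
def maxB (B : Set (Set α)) : Set (Set α) := {X ∈ B | ∀ Y ∈ B, X ⊆ Y → X = Y}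

/-- The rank of a set in a matroid: the largest size of an independent subset. -/
noncomputable def mrank (M : Matroid α) (X : Set α) : ℕ :=
  sSup {n : ℕ | ∃ I ⊆ X, M.Indep I ∧ I.ncard = n}

/-- A matroid is loopless if every singleton of the ground set is independent. -/
def MLoopless (M : Matroid α) : Prop := ∀ e ∈ M.E, M.Indep {e}

/-- A matroid is connected if its rank function is not additive over any
separation of the ground set into two nonempty parts. -/
def MConnected (M : Matroid α) : Prop :=
  ∀ A B : Set α, A ∪ B = M.E → Disjoint A B → A.Nonempty → B.Nonempty →
    mrank M A + mrank M B ≠ mrank M M.E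

/-- A building set for a matroid `M`: a set of nonempty flats containing all nonempty
flats whose restriction is connected, and closed under joins of intersecting members. -/
def IsBuildingSet (M : Matroid α) (B : Set (Set α)) : Prop :=
  (∀ X ∈ B, M.IsFlat X ∧ X.Nonempty) ∧
  (∀ X, M.IsFlat X → X.Nonempty → MConnected (M.restrict X) → X ∈ B) ∧
  (∀ X ∈ B, ∀ Y ∈ B, (X ∩ Y).Nonempty → M.closure (X ∪ Y) ∈ B)

/-- A nested set of a building set `B`. -/
def IsNested (M : Matroid α) (B N : Set (Set α)) : Prop :=
  N ⊆ B ∧ maxB B ⊆ N ∧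
  ∀ S : Set (Set α), S ⊆ N → S.Nontrivial → S.Pairwise Incomp →
    M.closure (⋃₀ S) ∉ B

/-- An inclusion-maximal nested set. -/
def IsMaxNested (M : Matroid α) (B N : Set (Set α)) : Prop :=
  IsNested M B N ∧ ∀ N', IsNested M B N' → N ⊆ N' → N' = N

/-- An atom of a matroid: a rank-one flat. -/
def IsAtomFlat (M : Matroid α) (A : Set α) : Prop := M.IsFlat A ∧ mrank M A = 1

/-- Atoms are compared by their least elements. -/
def atomLE [Preorder α] (A A' : Set α) : Prop :=
  ∃ a a', IsLeast A a ∧ IsLeast A' a' ∧ a ≤ a'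

/-- Strict comparison of atoms by their least elements. -/
def atomLT [Preorder α] (A A' : Set α) : Prop :=
  ∃ a a', IsLeast A a ∧ IsLeast A' a' ∧ a < a'

/-- `A` is an admissible label for `X` within the family `S`:
an atom contained in `X` but in no member of `S` properly below `X`. -/
def GoodLabel (M : Matroid α) (S : Set (Set α)) (X A : Set α) : Prop :=
  IsAtomFlat M A ∧ A ⊆ X ∧ ∀ Y ∈ S, Y ⊂ X → ¬ A ⊆ Y

/-- `A` is the label `m_S(X)`: the least admissible label for `X` within `S`. -/
def IsMinLabel [Preorder α] (M : Matroid α) (S : Set (Set α)) (X A : Set α) : Prop :=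
  GoodLabel M S X A ∧ ∀ A', GoodLabel M S X A' → atomLE A A'

/-- `NLListing M N R L` : `L` is the NL-listing of the remaining family `R`
(labels computed with respect to the whole family `N`), obtained by repeatedly
plucking the inclusion-minimal member with least label. -/
inductive NLListing [Preorder α] (M : Matroid α) (N : Set (Set α)) :
    Set (Set α) → List (Set α × Set α) → Prop
  | nil : NLListing M N ∅ []
  | cons {R : Set (Set α)} {X A : Set α} {L : List (Set α × Set α)} :
      X ∈ R →
      (∀ Y ∈ R, Y ⊆ X → Y = X) →
      IsMinLabel M N X A →
      (∀ Y ∈ R, (∀ W ∈ R, W ⊆ Y → W = Y) → ∀ A', IsMinLabel M N Y A' → atomLE A A') →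
      NLListing M N (R \ {X}) L →
      NLListing M N R ((X, A) :: L)

/-- A descent of a list of atoms at position `i`. -/
def HasDescentAt [Preorder α] (L : List (Set α)) (i : ℕ) : Prop :=
  ∃ h : i + 1 < L.length, atomLT (L.get ⟨i + 1, h⟩) (L.get ⟨i, Nat.lt_of_succ_lt h⟩)

/-- The indicator vector of a set. -/
noncomputable def indVec (X : Set α) : α → ℝ := X.indicator 1

/-- `v` is the vertex of the nested set `N` for the weight vector `c`. -/
def IsVertex (M : Matroid α) (B : Set (Set α)) (c : Set α → ℝ) (N : Set (Set α))
    (v : α → ℝ) : Prop :=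
  (∀ X ∈ N, ∑ᶠ a ∈ X, v a = c X) ∧
  ∃ lam mu : Set α → ℝ,
    (∀ X ∈ N \ maxB B, 0 < lam X) ∧
    v = (∑ᶠ X ∈ N \ maxB B, lam X • indVec X) + ∑ᶠ Y ∈ maxB B, mu Y • indVec Y

/-- `c` is cubical: every nested set has a unique vertex. -/
def IsCubical (M : Matroid α) (B : Set (Set α)) (c : Set α → ℝ) : Prop :=
  ∀ N, IsNested M B N → ∃! v, IsVertex M B c N v

/-- Lexicographic comparison of vectors in `ℝ^E`. -/
def lexLt [LinearOrder α] (u v : α → ℝ) : Prop :=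
  ∃ i, u i < v i ∧ ∀ j, j < i → u j = v j

open Classical in
/-- The map `τ_Z`. -/
noncomputable def tau (M : Matroid α) (Z X : Set α) : Set α :=
  if X ⊆ Z then X else M.closure (X ∪ Z) \ Z

/-- `MZ` is the contraction `M ／ Z`. -/
def IsContraction (M MZ : Matroid α) (Z : Set α) : Prop :=
  MZ.E = M.E \ Z ∧
  ∀ I : Set α, MZ.Indep I ↔ I ⊆ M.E \ Z ∧ ∃ J, M.IsBasis J Z ∧ M.Indep (I ∪ J)

/-- The closure of any set is a flat. -/
lemma flat_closure_aux (M : Matroid α) (X : Set α) : M.IsFlat (M.closure X) := by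
  rw [Matroid.closure_def, sInter_eq_iInter]
  have : Nonempty ↥{F | M.IsFlat F ∧ X ∩ M.E ⊆ F} :=
    ⟨⟨M.E, M.ground_isFlat, inter_subset_right⟩⟩
  exact Matroid.IsFlat.iInter fun F ↦ F.2.1

lemma mrank_bdd [Fintype α] (M : Matroid α) (X : Set α) :
    BddAbove {n : ℕ | ∃ I ⊆ X, M.Indep I ∧ I.ncard = n} := by
  refine ⟨Nat.card α, ?_⟩
  rintro n ⟨I, -, -, rfl⟩
  have := Set.ncard_le_ncard (Set.subset_univ I) Set.finite_univ
  simpa [Set.ncard_univ] using this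

lemma indep_ncard_le_one [Fintype α] (M : Matroid α) {x : α} {I : Set α}
    (hI : M.Indep I) (hIx : I ⊆ M.closure {x}) : I.ncard ≤ 1 := by
  by_contra h
  push_neg at h
  obtain ⟨a, ha, b, hb, hab⟩ := (Set.one_lt_ncard (Set.toFinite I)).1 h
  have haI : M.Indep {a} := hI.subset (by simpa using ha)
  have hal : a ∉ M.closure (∅ : Set α) := by
    have := haI.notMem_closure_diff_of_mem (e := a) rfl
    simpa using this
  have hax : a ∈ M.closure (insert x (∅ : Set α)) \ M.closure ∅ := by
    refine ⟨?_, hal⟩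
    simpa using hIx ha
  have hxa : x ∈ M.closure {a} := by
    have := Matroid.closure_exchange hax
    simpa using this.1
  have hxsub : M.closure {x} ⊆ M.closure {a} :=
    M.closure_subset_closure_of_subset_closure (by simpa)
  have hba : b ∈ M.closure (I \ {b}) := by
    have h1 : ({a} : Set α) ⊆ I \ {b} := by
      simp [ha, hab]
    exact M.closure_subset_closure h1 (hxsub (hIx hb))
  exact hI.notMem_closure_diff_of_mem hb hba

lemma mrank_closure_singleton [Fintype α] (M : Matroid α) (hM : MLoopless M)
    {x : α} (hx : x ∈ M.E) : mrank M (M.closure {x}) = 1 := by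
  apply le_antisymm
  · refine csSup_le ⟨0, ∅, empty_subset _, M.empty_indep, by simp⟩ ?_
    rintro n ⟨I, hIs, hI, rfl⟩
    exact indep_ncard_le_one M hI hIs
  · exact le_csSup (mrank_bdd M _)
      ⟨{x}, M.subset_closure {x} (by simpa), hM x hx, by simp⟩

lemma isAtomFlat_closure_singleton [Fintype α] (M : Matroid α) (hM : MLoopless M)
    {x : α} (hx : x ∈ M.E) : IsAtomFlat M (M.closure {x}) :=
  ⟨flat_closure_aux M _, mrank_closure_singleton M hM hx⟩

lemma atomFlat_nonempty [Fintype α] {M : Matroid α} {A : Set α}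
    (hA : IsAtomFlat M A) : A.Nonempty := by
  rcases A.eq_empty_or_nonempty with rfl | h
  · exfalso
    have h0 : mrank M (∅ : Set α) = 0 := by
      refine le_antisymm ?_ (Nat.zero_le _)
      refine csSup_le ⟨0, ∅, Subset.rfl, M.empty_indep, by simp⟩ ?_
      rintro n ⟨I, hIs, -, rfl⟩
      simp [Set.subset_empty_iff.1 hIs]
    rw [hA.2] at h0
    omega
  · exact h

lemma atom_eq_closure [Fintype α] (M : Matroid α) (hM : MLoopless M) {A : Set α}
    (hA : IsAtomFlat M A) {a : α} (ha : a ∈ A) : A = M.closure {a} := by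
  have haE : a ∈ M.E := hA.1.subset_ground ha
  have hsub : M.closure {a} ⊆ A := by
    have := M.closure_subset_closure (Set.singleton_subset_iff.2 ha)
    rwa [hA.1.closure] at this
  refine Set.Subset.antisymm (fun b hb ↦ ?_) hsub
  by_contra hbcl
  have hbE : b ∈ M.E := hA.1.subset_ground hb
  have hind : M.Indep (insert b {a}) := by
    rw [(hM a haE).insert_indep_iff]
    exact Or.inl ⟨hbE, hbcl⟩
  have hba : b ≠ a := fun h ↦ hbcl (h ▸ M.subset_closure {a} (by simpa) rfl)
  have h2 : (2 : ℕ) ∈ {n : ℕ | ∃ I ⊆ A, M.Indep I ∧ I.ncard = n} := by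
    refine ⟨insert b {a}, ?_, hind, ?_⟩
    · simp [Set.insert_subset_iff, hb, ha]
    · rw [Set.ncard_insert_of_notMem (by simp [hba]), Set.ncard_singleton]
  have hle := le_csSup (mrank_bdd M A) h2
  have : mrank M A = 1 := hA.2
  rw [show sSup {n : ℕ | ∃ I ⊆ A, M.Indep I ∧ I.ncard = n} = mrank M A from rfl, this] at hle
  omega

/-- for `X` in a nested set `N` there is an atom `A ⊆ X` contained in
no `Y ∈ N` with `Y ⊊ X`; consequently the label `m_N(X)` is well defined. -/
theorem label_well_defined {α : Type*} [Fintype α] [LinearOrder α]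
    (M : Matroid α) (hM : MLoopless M)
    (B : Set (Set α)) (hB : IsBuildingSet M B)
    (N : Set (Set α)) (hN : IsNested M B N)
    (X : Set α) (hX : X ∈ N) :
    (∃ A, GoodLabel M N X A) ∧ (∃! A, IsMinLabel M N X A) := by
  classical
  have hXB : X ∈ B := hN.1 hX
  obtain ⟨hXflat, hXne⟩ := hB.1 X hXB
  -- Existence of a good label
  have hex : ∃ A, GoodLabel M N X A := by
    by_contra hno
    push_neg at hno
    -- every point of X lies in some Y ∈ N with Y ⊂ X
    have hcov : ∀ x ∈ X, ∃ Y ∈ N, Y ⊂ X ∧ x ∈ Y := by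
      intro x hxX
      have hxE : x ∈ M.E := hXflat.subset_ground hxX
      have hatom := isAtomFlat_closure_singleton M hM hxE
      have hclsub : M.closure {x} ⊆ X := by
        have := M.closure_subset_closure (Set.singleton_subset_iff.2 hxX)
        rwa [hXflat.closure] at this
      by_contra hcon
      push_neg at hcon
      exact hno _ ⟨hatom, hclsub, fun Y hYN hYX hsub ↦
        hcon Y hYN hYX (hsub (M.subset_closure {x} (by simpa) rfl))⟩
    set F : Set (Set α) := {Y | Y ∈ N ∧ Y ⊂ X} with hF
    -- every member of F is below a maximal member
    have hmax : ∀ Y ∈ F, ∃ Z, Z ∈ F ∧ Y ⊆ Z ∧ ∀ W ∈ F, Z ⊆ W → Z = W := by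
      intro Y hY
      obtain ⟨Z, hZ, hZmax⟩ := Set.Finite.exists_maximalFor id {W ∈ F | Y ⊆ W}
        (Set.toFinite _) ⟨Y, hY, Subset.rfl⟩
      exact ⟨Z, hZ.1, hZ.2, fun W hW hZW ↦ hZW.antisymm (hZmax ⟨hW, hZ.2.trans hZW⟩ hZW)⟩
    set S : Set (Set α) := {Z ∈ F | ∀ W ∈ F, Z ⊆ W → Z = W} with hS
    have hSF : S ⊆ F := fun Z hZ ↦ hZ.1
    have hXU : ⋃₀ S = X := by
      apply Set.Subset.antisymm
      · exact Set.sUnion_subset fun Z hZ ↦ (hSF hZ).2.subset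
      · intro x hx
        obtain ⟨Y, hYN, hYX, hxY⟩ := hcov x hx
        obtain ⟨Z, hZF, hYZ, hZmax⟩ := hmax Y ⟨hYN, hYX⟩
        exact ⟨Z, ⟨hZF, hZmax⟩, hYZ hxY⟩
    have hSne : S.Nonempty := by
      obtain ⟨x, hx⟩ := hXne
      rw [← hXU] at hx
      obtain ⟨Z, hZ, -⟩ := hx
      exact ⟨Z, hZ⟩
    by_cases hnt : S.Nontrivial
    · have hSN : S ⊆ N := fun Z hZ ↦ (hSF hZ).1
      have hpair : S.Pairwise Incomp := by
        intro Z₁ h₁ Z₂ h₂ hne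
        constructor
        · exact fun hsub ↦ hne (h₁.2 Z₂ (hSF h₂) hsub)
        · exact fun hsub ↦ hne (h₂.2 Z₁ (hSF h₁) hsub).symm
      have := hN.2.2 S hSN hnt hpair
      rw [hXU, hXflat.closure] at this
      exact this hXB
    · obtain ⟨Z, hZ⟩ := hSne
      have hZX : Z = X := by
        rw [← hXU]
        apply Set.Subset.antisymm (Set.subset_sUnion_of_mem hZ)
        apply Set.sUnion_subset
        intro W hW
        rcases Set.not_nontrivial_iff.1 hnt hW hZ with h
        exact h.subset
      exact (hSF hZ).2.ne hZX
  refine ⟨hex, ?_⟩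
  -- every good label has a least element
  have hleast : ∀ A, GoodLabel M N X A → ∃ a, IsLeast A a := by
    intro A hA
    obtain ⟨a, ha, hmin⟩ := Set.exists_min_image A id (Set.toFinite A)
      (atomFlat_nonempty hA.1)
    exact ⟨a, ha, fun b hb ↦ hmin b hb⟩
  obtain ⟨A0, hA0⟩ := hex
  set T : Set α := {a | ∃ A, GoodLabel M N X A ∧ IsLeast A a} with hT
  have hTne : T.Nonempty := by
    obtain ⟨a, ha⟩ := hleast A0 hA0
    exact ⟨a, A0, hA0, ha⟩
  obtain ⟨a0, ha0T, ha0min⟩ := Set.exists_min_image T id (Set.toFinite T) hTne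
  obtain ⟨Am, hAm, hAmleast⟩ := ha0T
  have hAmmin : IsMinLabel M N X Am := by
    refine ⟨hAm, fun A' hA' ↦ ?_⟩
    obtain ⟨a', ha'⟩ := hleast A' hA'
    exact ⟨a0, a', hAmleast, ha', ha0min a' ⟨A', hA', ha'⟩⟩
  refine ⟨Am, hAmmin, ?_⟩
  rintro A' hA'
  obtain ⟨b, b', hb, hb', hble⟩ := hA'.2 Am hAm
  obtain ⟨c, c', hc, hc', hcle⟩ := hAmmin.2 A' hA'.1
  -- b least of A', b' least of Am, c least of Am, c' least of A'
  have h1 : b' = c := hb'.unique hc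
  have h2 : b = c' := hb.unique hc'
  have heq : b = b' := le_antisymm hble (h1 ▸ h2 ▸ hcle)
  have e1 : A' = M.closure {b} := atom_eq_closure M hM hA'.1.1 hb.1
  have e2 : Am = M.closure {b} := atom_eq_closure M hM hAm.1 (heq ▸ hb'.1)
  rw [e1, e2]
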